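/- arXiv:2208.12546 — 10 statements merged into one kernel-verified Lean document; each statement's English description precedes it below -/
import Mathlib

section
/- Let (X, d_o, a) be an O-metric space with d_o : X × X → [a,∞) and o : [a,∞) × [a,∞) → [a,∞). Suppose there is a monotone non-decreasing function λ : [a,∞) → [0,∞) with λ(t) = 0 iff t = a, and λ(o(u,v)) ≤ λ(u) + λ(v) for all u,v ≥ a. Then λ ∘ d_o is a metric on X. -/
theorem stmt_2 {X : Type*} (a : ℝ) (ha : 0 ≤ a)
    (d : X → X → ℝ) (o : ℝ → ℝ → ℝ) (lam : ℝ → ℝ)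
    (hdmap : ∀ x y, a ≤ d x y)
    (hself : ∀ x y, d x y = a ↔ x = y)
    (hsymm : ∀ x y, d x y = d y x)
    (htri : ∀ x y z, d x z ≤ o (d x y) (d y z))
    (hlmap : ∀ t, a ≤ t → 0 ≤ lam t)
    (hlmono : MonotoneOn lam (Set.Ici a))
    (hlzero : ∀ t, a ≤ t → (lam t = 0 ↔ t = a))
    (hlsub : ∀ u v, a ≤ u → a ≤ v → lam (o u v) ≤ lam u + lam v) :
    (∀ x y, 0 ≤ lam (d x y)) ∧
    (∀ x y, lam (d x y) = 0 ↔ x = y) ∧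
    (∀ x y, lam (d x y) = lam (d y x)) ∧
    (∀ x y z, lam (d x z) ≤ lam (d x y) + lam (d y z)) := by
  refine ⟨fun x y => hlmap _ (hdmap x y), fun x y => ?_, fun x y => by rw [hsymm], fun x y z => ?_⟩
  · rw [hlzero _ (hdmap x y), hself]
  · have ho : a ≤ o (d x y) (d y z) := le_trans (hdmap x z) (htri x y z)
    calc lam (d x z) ≤ lam (o (d x y) (d y z)) :=
          hlmono (hdmap x z) ho (htri x y z)
      _ ≤ lam (d x y) + lam (d y z) := hlsub _ _ (hdmap x y) (hdmap y z)
end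

section
/- Let X be a nonempty set, a ≥ 0, d_o : X × X → [a,∞), λ : [a,∞) → [0,∞) strictly increasing with λ(a) = 0, and o : [a,∞) × [a,∞) → [a,∞) such that λ(o(u,v)) = λ(u) + λ(v) for all u,v ≥ a. Then d_o is an o-metric on X with base point a if and only if λ ∘ d_o is a metric on X. -/
theorem stmt_3 {X : Type*} [Nonempty X] (a : ℝ) (ha : 0 ≤ a)
    (d : X → X → ℝ) (o : ℝ → ℝ → ℝ) (lam : ℝ → ℝ)
    (hdmap : ∀ x y, a ≤ d x y)
    (homap : ∀ u v, a ≤ u → a ≤ v → a ≤ o u v)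
    (hlmono : StrictMonoOn lam (Set.Ici a))
    (hla : lam a = 0)
    (hlo : ∀ u v, a ≤ u → a ≤ v → lam (o u v) = lam u + lam v) :
    ((∀ x y, d x y = a ↔ x = y) ∧
     (∀ x y, d x y = d y x) ∧
     (∀ x y z, d x z ≤ o (d x y) (d y z)))
    ↔
    ((∀ x y, lam (d x y) = 0 ↔ x = y) ∧
     (∀ x y, lam (d x y) = lam (d y x)) ∧
     (∀ x y z, lam (d x z) ≤ lam (d x y) + lam (d y z))) := by
  have hzero : ∀ x y : X, lam (d x y) = 0 ↔ d x y = a := by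
    intro x y
    rw [← hla]
    constructor
    · intro h
      exact hlmono.injOn (hdmap x y) (Set.self_mem_Ici) h
    · intro h; rw [h]
  have htri : ∀ x y z : X, (d x z ≤ o (d x y) (d y z)) ↔
      lam (d x z) ≤ lam (d x y) + lam (d y z) := by
    intro x y z
    rw [← hlo _ _ (hdmap x y) (hdmap y z)]
    exact (hlmono.le_iff_le (hdmap x z) (homap _ _ (hdmap x y) (hdmap y z))).symm
  constructor
  · rintro ⟨h1, h2, h3⟩
    refine ⟨fun x y => (hzero x y).trans (h1 x y), fun x y => by rw [h2 x y],
      fun x y z => (htri x y z).mp (h3 x y z)⟩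
  · rintro ⟨h1, h2, h3⟩
    refine ⟨fun x y => (hzero x y).symm.trans (h1 x y),
      fun x y => hlmono.injOn (hdmap x y) (hdmap y x) (h2 x y),
      fun x y z => (htri x y z).mpr (h3 x y z)⟩
end

section
/- Let (X, d_o, a) be an O-metric space with d_o : X × X → I_a and o : I_a × I_a → [0,∞), and suppose φ : I_a × I_a → ℝ satisfies: w ≤ o(u,v) iff φ(w,v) ≤ u, for all u,v,w ∈ I_a. Then for all x,y,z ∈ X, max{φ(d_o(x,z), d_o(z,y)), φ(d_o(z,y), d_o(x,z))} ≤ d_o(x,y) (the reverse triangle inequality). -/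
theorem stmt_7 {X : Type*} (a : ℝ) (Ia : Set ℝ) (hIa : Ia ⊆ Set.Ici 0) (haI : a ∈ Ia)
    (d : X → X → ℝ) (o : ℝ → ℝ → ℝ) (φ : ℝ → ℝ → ℝ)
    (hdmem : ∀ x y, d x y ∈ Ia)
    (hself : ∀ x y, d x y = a ↔ x = y)
    (hsymm : ∀ x y, d x y = d y x)
    (htri : ∀ x y z, d x z ≤ o (d x y) (d y z))
    (hmirror : ∀ u ∈ Ia, ∀ v ∈ Ia, ∀ w ∈ Ia, (w ≤ o u v ↔ φ w v ≤ u)) :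
    ∀ x y z : X, max (φ (d x z) (d z y)) (φ (d z y) (d x z)) ≤ d x y := by
  intro x y z
  apply max_le
  · have h := (hmirror (d x y) (hdmem x y) (d y z) (hdmem y z) (d x z) (hdmem x z)).mp
      (htri x y z)
    rwa [hsymm y z] at h
  · have h := (hmirror (d y x) (hdmem y x) (d x z) (hdmem x z) (d y z) (hdmem y z)).mp
      (htri y x z)
    rwa [hsymm y z, hsymm y x] at h
end

section
/- Let (X, d_o, a) be an O-metric space with o : I_a × I_a → [0,∞). Define 𝒯₂ = {A ⊆ X : ∀x ∈ A ∃r > 0, B(x,r) ⊆ A} where B(x,r) = {y : |d_o(x,y) − a| < r}, and 𝒯₃ = {A ⊆ X : for every sequence (x_n) with d_o(x_n, x) → a and x ∈ A, x_n ∈ A eventually}. Then 𝒯₂ and 𝒯₃ are topologies on X and 𝒯₂ = 𝒯₃. -/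
open Filter

/-- A family of subsets of `X` is a topology (in the set-of-opens sense). -/
def IsTopologyFam {X : Type*} (T : Set (Set X)) : Prop :=
  Set.univ ∈ T ∧ (∀ S ⊆ T, ⋃₀ S ∈ T) ∧ (∀ A ∈ T, ∀ B ∈ T, A ∩ B ∈ T)

theorem stmt_11 {X : Type*} (a : ℝ) (Ia : Set ℝ) (hIa : Ia ⊆ Set.Ici 0) (haI : a ∈ Ia)
    (d : X → X → ℝ) (o : ℝ → ℝ → ℝ)
    (hdmem : ∀ x y, d x y ∈ Ia)
    (hself : ∀ x y, d x y = a ↔ x = y)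
    (hsymm : ∀ x y, d x y = d y x)
    (htri : ∀ x y z, d x z ≤ o (d x y) (d y z))
    (B : X → ℝ → Set X) (hB : ∀ x r, B x r = {y | |d x y - a| < r})
    (T₂ T₃ : Set (Set X))
    (hT₂ : T₂ = {A | ∀ x ∈ A, ∃ r > 0, B x r ⊆ A})
    (hT₃ : T₃ = {A | ∀ (u : ℕ → X) (x : X),
        Tendsto (fun n => d (u n) x) atTop (nhds a) → x ∈ A →
        ∀ᶠ n in atTop, u n ∈ A}) :
    IsTopologyFam T₂ ∧ IsTopologyFam T₃ ∧ T₂ = T₃ := by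
  subst hT₂ hT₃
  have h2 : IsTopologyFam {A : Set X | ∀ x ∈ A, ∃ r > 0, B x r ⊆ A} := by
    refine ⟨fun x _ => ⟨1, one_pos, by simp⟩, ?_, ?_⟩
    · intro S hS x hx
      obtain ⟨A, hAS, hxA⟩ := hx
      obtain ⟨r, hr, hBr⟩ := hS hAS x hxA
      exact ⟨r, hr, hBr.trans (Set.subset_sUnion_of_mem hAS)⟩
    · intro A hA C hC x hx
      obtain ⟨r₁, hr₁, h₁⟩ := hA x hx.1
      obtain ⟨r₂, hr₂, h₂⟩ := hC x hx.2
      refine ⟨min r₁ r₂, lt_min hr₁ hr₂, fun y hy => ?_⟩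
      rw [hB] at hy h₁ h₂
      have hy' : |d x y - a| < min r₁ r₂ := hy
      exact ⟨h₁ (Set.mem_setOf_eq ▸ lt_of_lt_of_le hy' (min_le_left _ _)),
        h₂ (Set.mem_setOf_eq ▸ lt_of_lt_of_le hy' (min_le_right _ _))⟩
  have heq : {A : Set X | ∀ x ∈ A, ∃ r > 0, B x r ⊆ A} =
      {A : Set X | ∀ (u : ℕ → X) (x : X),
        Tendsto (fun n => d (u n) x) atTop (nhds a) → x ∈ A →
        ∀ᶠ n in atTop, u n ∈ A} := by
    ext A
    constructor
    · intro hA u x hu hx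
      obtain ⟨r, hr, hBr⟩ := hA x hx
      have := (Metric.tendsto_nhds.mp hu) r hr
      filter_upwards [this] with n hn
      apply hBr
      rw [hB]
      rw [Real.dist_eq] at hn
      simpa [hsymm x (u n)] using hn
    · intro hA x hx
      by_contra hcon
      push_neg at hcon
      have hpick : ∀ n : ℕ, ∃ y, y ∈ B x (1 / (n + 1)) ∧ y ∉ A := by
        intro n
        have := hcon (1 / (n + 1 : ℝ)) (by positivity)
        rw [Set.not_subset] at this
        exact this
      choose u hu1 hu2 using hpick
      have htend : Tendsto (fun n => d (u n) x) atTop (nhds a) := by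
        rw [Metric.tendsto_nhds]
        intro ε hε
        obtain ⟨N, hN⟩ := exists_nat_gt (1 / ε)
        filter_upwards [eventually_ge_atTop N] with n hn
        have h1 : (1 : ℝ) / (n + 1) < ε := by
          rw [div_lt_iff₀ (by positivity)]
          rw [div_lt_iff₀ hε] at hN
          calc (1 : ℝ) < N * ε := hN
            _ ≤ ε * (n + 1) := by
                rw [mul_comm]
                have : (N : ℝ) ≤ n + 1 := by exact_mod_cast Nat.le_succ_of_le hn
                nlinarith
        have := hu1 n
        rw [hB] at this
        rw [Real.dist_eq, hsymm]
        exact lt_trans this h1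
      have := hA u x htend hx
      obtain ⟨n, hn⟩ := this.exists
      exact hu2 n hn
  exact ⟨h2, heq ▸ h2, heq⟩
end

section
/- Let (X, d_o, a) be an O-metric space with o : I_a × I_a → [0,∞). Suppose o is continuous at (a,a), non-decreasing in both variables, and o(u,a) = a ⟺ u = a. If a sequence (x_n) in X satisfies d_o(x_n, x) → a and d_o(x_n, y) → a for x, y ∈ X, then x = y (limits are unique). -/
/-!
Passing to the limit in `d x y ≤ o (d (u n) x) (d (u n) y)` gives `d x y ≤ o a a = a`.
Then `a = d x x ≤ o (d x y) (d y x) ≤ o (d x y) a ≤ o a a = a` by monotonicity, so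
`o (d x y) a = a`, which forces `d x y = a`, i.e. `x = y`.
-/

open Filter

theorem dist_le_of_tendsto_of_tendsto {ι X : Type*} {l : Filter ι} [l.NeBot]
    {a : ℝ} {d : X → X → ℝ} {o : ℝ → ℝ → ℝ}
    (hsymm : ∀ x y, d x y = d y x)
    (htri : ∀ x y z, d x z ≤ o (d x y) (d y z))
    (hcont : ContinuousAt (fun p : ℝ × ℝ => o p.1 p.2) (a, a)) (haa : o a a = a)
    {u : ι → X} {x y : X}
    (hx : Tendsto (fun n => d (u n) x) l (nhds a))
    (hy : Tendsto (fun n => d (u n) y) l (nhds a)) :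
    d x y ≤ a := by
  have htend : Tendsto (fun n => o (d (u n) x) (d (u n) y)) l (nhds a) := by
    simpa only [haa, Function.comp_def] using hcont.tendsto.comp (hx.prodMk_nhds hy)
  refine ge_of_tendsto htend (Eventually.of_forall fun n => ?_)
  calc d x y ≤ o (d x (u n)) (d (u n) y) := htri x (u n) y
    _ = o (d (u n) x) (d (u n) y) := by rw [hsymm x (u n)]

theorem eq_of_dist_le {X : Type*} {a : ℝ} {Ia : Set ℝ} (haI : a ∈ Ia)
    {d : X → X → ℝ} {o : ℝ → ℝ → ℝ}
    (hdmem : ∀ x y, d x y ∈ Ia)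
    (hself : ∀ x y, d x y = a ↔ x = y)
    (hsymm : ∀ x y, d x y = d y x)
    (htri : ∀ x y z, d x z ≤ o (d x y) (d y z))
    (hmono : ∀ u₁ ∈ Ia, ∀ u₂ ∈ Ia, ∀ v₁ ∈ Ia, ∀ v₂ ∈ Ia,
        u₁ ≤ u₂ → v₁ ≤ v₂ → o u₁ v₁ ≤ o u₂ v₂)
    (hzero : ∀ u ∈ Ia, (o u a = a ↔ u = a))
    {x y : X} (hle : d x y ≤ a) :
    x = y := by
  have hxy := hdmem x y
  have hge : a ≤ o (d x y) a :=
    calc a = d x x := ((hself x x).mpr rfl).symm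
      _ ≤ o (d x y) (d y x) := htri x y x
      _ = o (d x y) (d x y) := by rw [hsymm y x]
      _ ≤ o (d x y) a := hmono _ hxy _ hxy _ hxy _ haI le_rfl hle
  have hle' : o (d x y) a ≤ a :=
    calc o (d x y) a ≤ o a a := hmono _ hxy _ haI _ haI _ haI hle le_rfl
      _ = a := (hzero a haI).mpr rfl
  exact (hself x y).mp ((hzero _ hxy).mp (le_antisymm hle' hge))

theorem stmt_12_general {X : Type*} (a : ℝ) (Ia : Set ℝ) (haI : a ∈ Ia)
    (d : X → X → ℝ) (o : ℝ → ℝ → ℝ)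
    (hdmem : ∀ x y, d x y ∈ Ia)
    (hself : ∀ x y, d x y = a ↔ x = y)
    (hsymm : ∀ x y, d x y = d y x)
    (htri : ∀ x y z, d x z ≤ o (d x y) (d y z))
    (hcont : ContinuousAt (fun p : ℝ × ℝ => o p.1 p.2) (a, a))
    (hmono : ∀ u₁ ∈ Ia, ∀ u₂ ∈ Ia, ∀ v₁ ∈ Ia, ∀ v₂ ∈ Ia,
        u₁ ≤ u₂ → v₁ ≤ v₂ → o u₁ v₁ ≤ o u₂ v₂)
    (hzero : ∀ u ∈ Ia, (o u a = a ↔ u = a))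
    (u : ℕ → X) (x y : X)
    (hx : Tendsto (fun n => d (u n) x) atTop (nhds a))
    (hy : Tendsto (fun n => d (u n) y) atTop (nhds a)) :
    x = y :=
  eq_of_dist_le haI hdmem hself hsymm htri hmono hzero <|
    dist_le_of_tendsto_of_tendsto hsymm htri hcont ((hzero a haI).mpr rfl) hx hy

theorem stmt_12 {X : Type*} (a : ℝ) (Ia : Set ℝ) (hIa : Ia ⊆ Set.Ici 0) (haI : a ∈ Ia)
    (d : X → X → ℝ) (o : ℝ → ℝ → ℝ)
    (hdmem : ∀ x y, d x y ∈ Ia)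
    (hself : ∀ x y, d x y = a ↔ x = y)
    (hsymm : ∀ x y, d x y = d y x)
    (htri : ∀ x y z, d x z ≤ o (d x y) (d y z))
    (hcont : ContinuousAt (fun p : ℝ × ℝ => o p.1 p.2) (a, a))
    (hmono : ∀ u₁ ∈ Ia, ∀ u₂ ∈ Ia, ∀ v₁ ∈ Ia, ∀ v₂ ∈ Ia,
        u₁ ≤ u₂ → v₁ ≤ v₂ → o u₁ v₁ ≤ o u₂ v₂)
    (hzero : ∀ u ∈ Ia, (o u a = a ↔ u = a))
    (u : ℕ → X) (x y : X)
    (hx : Tendsto (fun n => d (u n) x) atTop (nhds a))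
    (hy : Tendsto (fun n => d (u n) y) atTop (nhds a)) :
    x = y :=
  stmt_12_general a Ia haI d o hdmem hself hsymm htri hcont hmono hzero u x y hx hy
end

section
/- Let (X, d_o, a) be an O-metric space with d_o : X × X → I_a, o : I_a × I_a → [0,∞). Assume: for all r > 0 and all u ∈ I_a with |u − a| < r, there exists s > 0 such that for all w, v ∈ I_a, if |v − a| < s and w ≤ o(u,v), then |w − a| < r. Then every open ball B(x₀, r) = {y : |d_o(x₀,y) − a| < r} is open in the topology 𝒯 = {A ⊆ X : ∀x ∈ A ∃ρ > 0, B(x,ρ) ⊆ A}. -/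
theorem stmt_14 {X : Type*} (a : ℝ) (Ia : Set ℝ) (hIa : Ia ⊆ Set.Ici 0) (haI : a ∈ Ia)
    (d : X → X → ℝ) (o : ℝ → ℝ → ℝ)
    (hdmem : ∀ x y, d x y ∈ Ia)
    (hself : ∀ x y, d x y = a ↔ x = y)
    (hsymm : ∀ x y, d x y = d y x)
    (htri : ∀ x y z, d x z ≤ o (d x y) (d y z))
    (hcond : ∀ r > 0, ∀ u ∈ Ia, |u - a| < r → ∃ s > 0, ∀ w ∈ Ia, ∀ v ∈ Ia,
        |v - a| < s → w ≤ o u v → |w - a| < r) :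
    ∀ (x₀ : X) (r : ℝ), 0 < r →
      ∀ x ∈ {y | |d x₀ y - a| < r}, ∃ ρ > 0,
        {y | |d x y - a| < ρ} ⊆ {y | |d x₀ y - a| < r} := by
  intro x₀ r hr x hx
  obtain ⟨s, hs, h⟩ := hcond r hr (d x₀ x) (hdmem x₀ x) hx
  exact ⟨s, hs, fun y hy => h (d x₀ y) (hdmem x₀ y) (d x y) (hdmem x y) hy (htri x₀ x y)⟩
end

section
/- Let (X, d_o, a) be an upward O-metric space (d_o : X × X → [a,∞), o : [a,∞)² → [a,∞)). Suppose there exists γ : [a,∞)² → ℝ such that a ≤ u < r implies γ(r,u) > a and o(u, γ(r,u)) ≤ r, and o is increasing in both variables. Then the O-metric topology on X is Hausdorff: for distinct x,y ∈ X there exist disjoint open balls around x and y. -/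
theorem stmt_15 {X : Type*} (a : ℝ) (ha : 0 ≤ a)
    (d : X → X → ℝ) (o : ℝ → ℝ → ℝ) (γ : ℝ → ℝ → ℝ)
    (hdmap : ∀ x y, a ≤ d x y)
    (homap : ∀ u v, a ≤ u → a ≤ v → a ≤ o u v)
    (hself : ∀ x y, d x y = a ↔ x = y)
    (hsymm : ∀ x y, d x y = d y x)
    (htri : ∀ x y z, d x z ≤ o (d x y) (d y z))
    (hγ : ∀ r u, a ≤ u → u < r → a < γ r u ∧ o u (γ r u) ≤ r)
    (hmono₁ : ∀ v, a ≤ v → StrictMonoOn (fun u => o u v) (Set.Ici a))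
    (hmono₂ : ∀ u, a ≤ u → StrictMonoOn (fun v => o u v) (Set.Ici a)) :
    ∀ x y : X, x ≠ y → ∃ r₁ > 0, ∃ r₂ > 0,
      {z | d x z < a + r₁} ∩ {z | d y z < a + r₂} = ∅ := by
  intro x y hxy
  set r := d x y with hr
  have har : a < r := lt_of_le_of_ne (hdmap x y) (fun h => hxy ((hself x y).mp h.symm))
  set u : ℝ := (a + r) / 2 with hu
  have hau : a < u := by simp [hu]; linarith
  have hur : u < r := by simp [hu]; linarith
  obtain ⟨hγ1, hγ2⟩ := hγ r u hau.le hur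
  refine ⟨(r - a) / 2, by linarith, γ r u - a, by linarith, ?_⟩
  ext z
  simp only [Set.mem_inter_iff, Set.mem_setOf_eq, Set.mem_empty_iff_false, iff_false, not_and]
  intro h1 h2
  have hxz : d x z < u := by rw [hu]; linarith
  have hyz : d y z < γ r u := by linarith
  have step1 : o (d x z) (d y z) < o u (d y z) :=
    hmono₁ (d y z) (hdmap y z) (hdmap x z) hau.le hxz
  have step2 : o u (d y z) < o u (γ r u) :=
    hmono₂ u hau.le (hdmap y z) hγ1.le hyz
  have : d x y ≤ o (d x z) (d z y) := htri x z y
  rw [hsymm z y] at this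
  linarith
end

section
/- Let (X, d_o, a) be any O-metric space with o : I_a × I_a → [0,∞). Define d_ξ(x,y) = a + |d_o(x,y) − a| and ξ(u,v) = max{o(u,v), o(u, 2a−v), o(2a−u, v), o(2a−u, 2a−v), 2a} (interpreting o only where arguments lie in I_a; formally take ξ(u,v) as the sup of the defined values among these). Then (X, d_ξ, a) is an a-upward O-metric space, and for any sequence (x_n) and point x ∈ X, d_o(x_n, x) → a if and only if d_ξ(x_n, x) → a; hence the two O-metrics induce the same topology. -/
open Filter

theorem stmt_16 {X : Type*} (a : ℝ) (Ia : Set ℝ) (hIa : Ia ⊆ Set.Ici 0) (haI : a ∈ Ia)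
    (d : X → X → ℝ) (o : ℝ → ℝ → ℝ)
    (hdmem : ∀ x y, d x y ∈ Ia)
    (hself : ∀ x y, d x y = a ↔ x = y)
    (hsymm : ∀ x y, d x y = d y x)
    (htri : ∀ x y z, d x z ≤ o (d x y) (d y z))
    (dξ : X → X → ℝ) (hdξ : ∀ x y, dξ x y = a + |d x y - a|)
    (ξ : ℝ → ℝ → ℝ)
    (hξ : ∀ u v, ξ u v = sSup ({2 * a} ∪
        {w | ∃ u' v', u' ∈ Ia ∧ v' ∈ Ia ∧ (u' = u ∨ u' = 2 * a - u) ∧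
          (v' = v ∨ v' = 2 * a - v) ∧ w = o u' v'})) :
    (∀ x y, a ≤ dξ x y) ∧
    (∀ x y, dξ x y = a ↔ x = y) ∧
    (∀ x y, dξ x y = dξ y x) ∧
    (∀ x y z, dξ x z ≤ ξ (dξ x y) (dξ y z)) ∧
    (∀ (u : ℕ → X) (x : X),
      Tendsto (fun n => d (u n) x) atTop (nhds a) ↔
      Tendsto (fun n => dξ (u n) x) atTop (nhds a)) := by
  refine ⟨?_, ?_, ?_, ?_, ?_⟩
  · intro x y; rw [hdξ]; have := abs_nonneg (d x y - a); linarith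
  · intro x y
    rw [hdξ, ← hself x y]
    constructor
    · intro h
      have : |d x y - a| = 0 := by linarith
      have := abs_eq_zero.mp this
      linarith
    · intro h; rw [h]; simp
  · intro x y; rw [hdξ, hdξ, hsymm]
  · intro x y z
    set u := dξ x y with hu
    set v := dξ y z with hv
    set S : Set ℝ := ({2 * a} ∪
        {w | ∃ u' v', u' ∈ Ia ∧ v' ∈ Ia ∧ (u' = u ∨ u' = 2 * a - u) ∧
          (v' = v ∨ v' = 2 * a - v) ∧ w = o u' v'}) with hS
    have hbdd : BddAbove S := by
      have hsub : S ⊆ {2 * a, o u v, o u (2*a - v), o (2*a - u) v, o (2*a - u) (2*a - v)} := by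
        rintro w (hw | ⟨u', v', _, _, (rfl | rfl), (rfl | rfl), rfl⟩)
        · exact Or.inl hw
        · exact Or.inr (Or.inl rfl)
        · exact Or.inr (Or.inr (Or.inl rfl))
        · exact Or.inr (Or.inr (Or.inr (Or.inl rfl)))
        · exact Or.inr (Or.inr (Or.inr (Or.inr rfl)))
      exact BddAbove.mono hsub (Set.toFinite _).bddAbove
    have hxy : d x y = u ∨ d x y = 2 * a - u := by
      rcases abs_cases (d x y - a) with ⟨h1, _⟩ | ⟨h1, _⟩
      · left; rw [hu, hdξ, h1]; ring
      · right; rw [hu, hdξ, h1]; ring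
    have hyz : d y z = v ∨ d y z = 2 * a - v := by
      rcases abs_cases (d y z - a) with ⟨h1, _⟩ | ⟨h1, _⟩
      · left; rw [hv, hdξ, h1]; ring
      · right; rw [hv, hdξ, h1]; ring
    have hmemo : o (d x y) (d y z) ∈ S :=
      Or.inr ⟨d x y, d y z, hdmem x y, hdmem y z, hxy, hyz, rfl⟩
    have hmem2a : (2 * a : ℝ) ∈ S := Or.inl rfl
    rw [hξ, ← hS]
    rcases abs_cases (d x z - a) with ⟨h1, _⟩ | ⟨h1, _⟩
    · have : dξ x z = d x z := by rw [hdξ, h1]; ring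
      rw [this]
      exact le_trans (htri x y z) (le_csSup hbdd hmemo)
    · have : dξ x z = 2 * a - d x z := by rw [hdξ, h1]; ring
      rw [this]
      have h0 : 0 ≤ d x z := hIa (hdmem x z)
      exact le_trans (by linarith) (le_csSup hbdd hmem2a)
  · intro u x
    have key : ∀ g : ℕ → ℝ, Tendsto g atTop (nhds a) ↔
        Tendsto (fun n => g n - a) atTop (nhds 0) := fun g => by
      rw [← tendsto_sub_nhds_zero_iff]
    constructor
    · intro h
      simp only [hdξ]
      have : Tendsto (fun n => |d (u n) x - a|) atTop (nhds 0) := by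
        have h0 := (key _).mp h
        simpa using h0.abs
      have := (tendsto_const_nhds : Tendsto (fun _ : ℕ => a) atTop (nhds a)).add this
      simpa using this
    · intro h
      have h1 : Tendsto (fun n => |d (u n) x - a|) atTop (nhds 0) := by
        have := (key _).mp h
        simp only [hdξ] at this
        simpa using this
      have h2 : Tendsto (fun n => d (u n) x - a) atTop (nhds 0) :=
        (tendsto_zero_iff_abs_tendsto_zero _).mpr (by simpa [Function.comp_def] using h1)
      exact (key _).mpr h2
end

section
/- Let (X, d, a) be a complete O-metric space with d : X × X → [a,∞), where completeness means every sequence (x_n) with d(x_n, x_m) → a (as n,m → ∞) converges to some x (d(x_n,x) → a). Suppose for each n ∈ ℕ there is a function Δ_n : [a,∞)ⁿ → [0,∞), non-decreasing in each variable, with d(x₀, x_n) ≤ Δ_n(d(x₀,x₁), …, d(x_{n−1}, x_n)) for all points. Let T : X → X and ψ : [a,∞) → [a,∞) be non-decreasing and continuous at a with ψ(a) = a, such that d(Tx, Ty) ≤ ψ(d(x,y)) for all x,y; ψⁿ(t) → a as n → ∞ for each t ≥ a; and for each i, Δ_i(ψ(t), ψ²(t), …, ψ^i(t)) → a as t → a⁺.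 If Δ₂ is continuous at (a,a) with Δ₂(a,a) = a, then T has a unique fixed point in X. -/
open Filter

theorem stmt_18 {X : Type*} [Nonempty X] (a : ℝ) (ha : 0 ≤ a)
    (d : X → X → ℝ)
    (hdmap : ∀ x y, a ≤ d x y)
    (hself : ∀ x y, d x y = a ↔ x = y)
    (hsymm : ∀ x y, d x y = d y x)
    (hcomplete : ∀ u : ℕ → X,
      Tendsto (fun p : ℕ × ℕ => d (u p.1) (u p.2)) atTop (nhds a) →
      ∃ x : X, Tendsto (fun n => d (u n) x) atTop (nhds a))
    (Δ : (n : ℕ) → (Fin n → ℝ) → ℝ)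
    (hΔmap : ∀ n f, (∀ i, a ≤ f i) → 0 ≤ Δ n f)
    (hΔmono : ∀ n (f g : Fin n → ℝ), (∀ i, a ≤ f i) → (∀ i, f i ≤ g i) → Δ n f ≤ Δ n g)
    (hpoly : ∀ (n : ℕ) (x : ℕ → X),
      d (x 0) (x n) ≤ Δ n (fun i => d (x i) (x (i + 1))))
    (T : X → X) (ψ : ℝ → ℝ)
    (hψmap : ∀ t, a ≤ t → a ≤ ψ t)
    (hψmono : MonotoneOn ψ (Set.Ici a))
    (hψcont : ContinuousWithinAt ψ (Set.Ici a) a)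
    (hψa : ψ a = a)
    (hcontr : ∀ x y, d (T x) (T y) ≤ ψ (d x y))
    (hψiter : ∀ t, a ≤ t → Tendsto (fun n => ψ^[n] t) atTop (nhds a))
    (hΔψ : ∀ i : ℕ, Tendsto (fun t => Δ i (fun j => ψ^[(j : ℕ) + 1] t))
        (nhdsWithin a (Set.Ici a)) (nhds a))
    (hΔ₂cont : ContinuousWithinAt (fun p : ℝ × ℝ => Δ 2 ![p.1, p.2])
        (Set.Ici a ×ˢ Set.Ici a) (a, a))
    (hΔ₂a : Δ 2 ![a, a] = a) :
    ∃! x : X, T x = x := by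
    -- ψ iterates stay in [a, ∞)
  have hiter_mem : ∀ (j : ℕ) (t : ℝ), a ≤ t → a ≤ ψ^[j] t := by
    intro j
    induction j with
    | zero => intro t ht; simpa using ht
    | succ j ih =>
      intro t ht
      rw [Function.iterate_succ_apply]
      exact ih _ (hψmap t ht)
  -- ψ iterates are monotone on [a, ∞)
  have hiter_mono : ∀ (j : ℕ) (s t : ℝ), a ≤ s → s ≤ t → ψ^[j] s ≤ ψ^[j] t := by
    intro j
    induction j with
    | zero => intro s t _ hst; simpa using hst
    | succ j ih =>
      intro s t hs hst
      rw [Function.iterate_succ_apply, Function.iterate_succ_apply]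
      exact ih _ _ (hψmap s hs) (hψmono hs (hs.trans hst) hst)
  -- ψ t < t for t > a
  have hψlt : ∀ t, a < t → ψ t < t := by
    intro t ht
    by_contra hcon
    push_neg at hcon
    have hge : ∀ n, t ≤ ψ^[n] t := by
      intro n
      induction n with
      | zero => simp
      | succ n ih =>
        rw [Function.iterate_succ_apply']
        exact le_trans hcon (hψmono ht.le (hiter_mem n t ht.le) ih)
    have : t ≤ a := ge_of_tendsto' (hψiter t ht.le) hge
    linarith
  have hψle : ∀ t, a ≤ t → ψ t ≤ t := by
    intro t ht
    rcases eq_or_lt_of_le ht with h | h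
    · rw [← h, hψa]
    · exact (hψlt t h).le
  -- contraction for iterates
  have hcontr_iter : ∀ (j : ℕ) (x y : X), d (T^[j] x) (T^[j] y) ≤ ψ^[j] (d x y) := by
    intro j
    induction j with
    | zero => intro x y; simp
    | succ j ih =>
      intro x y
      rw [Function.iterate_succ_apply, Function.iterate_succ_apply,
        Function.iterate_succ_apply]
      exact le_trans (ih (T x) (T y)) (hiter_mono j _ _ (hdmap _ _) (hcontr x y))
  -- triangle-type inequality from the polygon inequality with n = 2
  have tri : ∀ y0 y1 y2 : X, d y0 y2 ≤ Δ 2 ![d y0 y1, d y1 y2] := by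
    intro y0 y1 y2
    have h := hpoly 2 (fun m => if m = 0 then y0 else if m = 1 then y1 else y2)
    have e : (fun i : Fin 2 =>
        d ((fun m : ℕ => if m = 0 then y0 else if m = 1 then y1 else y2) i)
          ((fun m : ℕ => if m = 0 then y0 else if m = 1 then y1 else y2) (i + 1)))
        = ![d y0 y1, d y1 y2] := by
      funext i
      fin_cases i <;> norm_num
    rw [e] at h
    simpa using h
  -- the Δ₂ tendsto form
  have hΔ₂t : Tendsto (fun p : ℝ × ℝ => Δ 2 ![p.1, p.2])
      (nhdsWithin (a, a) (Set.Ici a ×ˢ Set.Ici a)) (nhds a) := by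
    have h : Tendsto (fun p : ℝ × ℝ => Δ 2 ![p.1, p.2])
        (nhdsWithin (a, a) (Set.Ici a ×ˢ Set.Ici a)) (nhds (Δ 2 ![a, a])) := hΔ₂cont
    rwa [hΔ₂a] at h
  -- δ-extraction from continuity of Δ₂ at (a,a)
  have key : ∀ ε : ℝ, 0 < ε → ∃ δ : ℝ, 0 < δ ∧ ∀ s t : ℝ, a ≤ s → s < a + δ → a ≤ t →
      t < a + δ → Δ 2 ![s, t] < a + ε := by
    intro ε hε
    have h1 : ∀ᶠ p in nhdsWithin (a, a) (Set.Ici a ×ˢ Set.Ici a),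
        Δ 2 ![p.1, p.2] < a + ε :=
      hΔ₂t.eventually (Iio_mem_nhds (by linarith))
    rw [Filter.eventually_iff, Metric.mem_nhdsWithin_iff] at h1
    obtain ⟨δ, hδ, hsub⟩ := h1
    refine ⟨δ, hδ, fun s t hs hs' ht ht' => ?_⟩
    have hmem : (s, t) ∈ Metric.ball ((a : ℝ), (a : ℝ)) δ := by
      rw [Metric.mem_ball, Prod.dist_eq]
      have e1 : dist s a < δ := by
        rw [Real.dist_eq, abs_of_nonneg (by linarith)]; linarith
      have e2 : dist t a < δ := by
        rw [Real.dist_eq, abs_of_nonneg (by linarith)]; linarith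
      exact max_lt e1 e2
    exact hsub ⟨hmem, Set.mk_mem_prod hs ht⟩
  -- eventual smallness of ψ iterates
  have hψev : ∀ t : ℝ, a ≤ t → ∀ c : ℝ, a < c → ∃ J : ℕ, ∀ j ≥ J, ψ^[j] t < c := by
    intro t ht c hc
    have := (hψiter t ht).eventually (Iio_mem_nhds hc)
    exact Filter.eventually_atTop.mp this
  -- the orbit
  obtain ⟨x₀⟩ := ‹Nonempty X›
  set u : ℕ → X := fun n => T^[n] x₀ with hu
  have hu_shift : ∀ j n : ℕ, T^[j] (u n) = u (j + n) := by
    intro j n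
    simp [hu, ← Function.iterate_add_apply]
  -- per-gap convergence
  have hgap : ∀ i : ℕ, Tendsto (fun n => d (u n) (u (n + i))) atTop (nhds a) := by
    intro i
    have hb : ∀ n, d (u n) (u (n + i)) ≤ ψ^[n] (d x₀ (u i)) := by
      intro n
      have h := hcontr_iter n x₀ (u i)
      rw [hu_shift n i] at h
      simpa [hu] using h
    exact tendsto_of_tendsto_of_tendsto_of_le_of_le tendsto_const_nhds
      (hψiter _ (hdmap _ _)) (fun n => hdmap _ _) hb
  -- boundedness of a tail of the orbit
  obtain ⟨δ₀, hδ₀pos, hδ₀⟩ := key 1 one_pos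
  set δ : ℝ := min δ₀ 1 with hδdef
  have hδpos : 0 < δ := lt_min hδ₀pos one_pos
  have hδ1 : δ ≤ 1 := min_le_right _ _
  have hδ : ∀ s t : ℝ, a ≤ s → s < a + δ → a ≤ t → t < a + δ → Δ 2 ![s, t] < a + 1 := by
    intro s t hs hs' ht ht'
    exact hδ₀ s t hs (lt_of_lt_of_le hs' (by simp [hδdef])) ht
      (lt_of_lt_of_le ht' (by simp [hδdef]))
  obtain ⟨J, hJ⟩ := hψev (a + 1) (by linarith) (a + δ) (by linarith)
  set j₀ : ℕ := max J 1 with hj₀def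
  have hj₀1 : 1 ≤ j₀ := le_max_right _ _
  have hj₀ : ψ^[j₀] (a + 1) < a + δ := hJ j₀ (le_max_left _ _)
  have hNi : ∀ i : ℕ, ∃ M, ∀ n ≥ M, d (u n) (u (n + i)) < a + δ := by
    intro i
    have := (hgap i).eventually (Iio_mem_nhds (show a < a + δ by linarith))
    exact Filter.eventually_atTop.mp this
  choose Nf hNf using hNi
  set N : ℕ := Finset.sup (Finset.range (j₀ + 1)) Nf with hNdef
  have hsmall : ∀ n ≥ N, ∀ i ≤ j₀, d (u n) (u (n + i)) < a + δ := by
    intro n hn i hi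
    exact hNf i n (le_trans (Finset.le_sup (Finset.mem_range.mpr (by omega))) hn)
  have hbound : ∀ k : ℕ, d (u N) (u (N + k)) ≤ a + 1 := by
    intro k
    induction k using Nat.strong_induction_on with
    | _ k ih =>
      by_cases hk : k ≤ j₀
      · exact le_trans (hsmall N le_rfl k hk).le (by linarith)
      · push_neg at hk
        have b1 : d (u N) (u (N + j₀)) < a + δ := hsmall N le_rfl j₀ le_rfl
        have b2 : d (u (N + j₀)) (u (N + k)) < a + δ := by
          have e1 : T^[j₀] (u N) = u (N + j₀) := by rw [hu_shift, Nat.add_comm]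
          have e2 : T^[j₀] (u (N + (k - j₀))) = u (N + k) := by
            rw [hu_shift]
            congr 1
            omega
          have hc := hcontr_iter j₀ (u N) (u (N + (k - j₀)))
          rw [e1, e2] at hc
          have hih := ih (k - j₀) (by omega)
          have hm : ψ^[j₀] (d (u N) (u (N + (k - j₀)))) ≤ ψ^[j₀] (a + 1) :=
            hiter_mono j₀ _ _ (hdmap _ _) hih
          linarith
        have htri := tri (u N) (u (N + j₀)) (u (N + k))
        have hlt := hδ _ _ (hdmap _ _) b1 (hdmap _ _) b2
        linarith
  -- Cauchy estimate
  have hw : ∀ n m : ℕ, n ≤ m → d (u (N + n)) (u (N + m)) ≤ ψ^[n] (a + 1) := by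
    intro n m hnm
    have e1 : T^[n] (u N) = u (N + n) := by rw [hu_shift, Nat.add_comm]
    have e2 : T^[n] (u (N + (m - n))) = u (N + m) := by
      rw [hu_shift]
      congr 1
      omega
    have hc := hcontr_iter n (u N) (u (N + (m - n)))
    rw [e1, e2] at hc
    exact le_trans hc (hiter_mono n _ _ (hdmap _ _) (hbound (m - n)))
  have hcauchy : Tendsto (fun p : ℕ × ℕ => d (u (N + p.1)) (u (N + p.2)))
      atTop (nhds a) := by
    rw [Metric.tendsto_atTop]
    intro ε hε
    obtain ⟨M, hM⟩ := hψev (a + 1) (by linarith) (a + ε) (by linarith)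
    refine ⟨(M, M), ?_⟩
    rintro ⟨n, m⟩ hp
    obtain ⟨hn, hm⟩ : M ≤ n ∧ M ≤ m := hp
    have hb : d (u (N + n)) (u (N + m)) ≤ ψ^[min n m] (a + 1) := by
      rcases le_total n m with h | h
      · rw [min_eq_left h]; exact hw n m h
      · rw [min_eq_right h, hsymm]; exact hw m n h
    have hlow : a ≤ d (u (N + n)) (u (N + m)) := hdmap _ _
    have hup : ψ^[min n m] (a + 1) < a + ε := hM _ (le_min hn hm)
    rw [Real.dist_eq, abs_of_nonneg (by linarith)]
    linarith
  obtain ⟨x, hx⟩ := hcomplete (fun n => u (N + n)) hcauchy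
  -- the limit is a fixed point
  have hfix : T x = x := by
    have hb : ∀ n : ℕ, d x (T x) ≤ Δ 2 ![d x (u (N + n + 1)), d (u (N + n + 1)) (T x)] :=
      fun n => tri x (u (N + n + 1)) (T x)
    have h1 : Tendsto (fun n => d x (u (N + n + 1))) atTop (nhds a) := by
      have h := hx.comp (tendsto_add_atTop_nat 1)
      exact h.congr fun n => hsymm _ _
    have h2 : Tendsto (fun n => d (u (N + n + 1)) (T x)) atTop (nhds a) := by
      have hwithin : Tendsto (fun n => d (u (N + n)) x) atTop
          (nhdsWithin a (Set.Ici a)) :=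
        tendsto_nhdsWithin_of_tendsto_nhds_of_eventually_within _ hx
          (Filter.Eventually.of_forall fun n => hdmap _ _)
      have hψt : Tendsto ψ (nhdsWithin a (Set.Ici a)) (nhds a) := by
        have h : Tendsto ψ (nhdsWithin a (Set.Ici a)) (nhds (ψ a)) := hψcont
        rwa [hψa] at h
      have hψcomp : Tendsto (fun n => ψ (d (u (N + n)) x)) atTop (nhds a) :=
        hψt.comp hwithin
      have hstep : ∀ n, d (u (N + n + 1)) (T x) ≤ ψ (d (u (N + n)) x) := by
        intro n
        have h := hcontr (u (N + n)) x
        have e : T (u (N + n)) = u (N + n + 1) := by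
          simp [hu, Function.iterate_succ_apply']
        rwa [e] at h
      exact tendsto_of_tendsto_of_tendsto_of_le_of_le tendsto_const_nhds hψcomp
        (fun n => hdmap _ _) hstep
    have hpair : Tendsto (fun n => (d x (u (N + n + 1)), d (u (N + n + 1)) (T x)))
        atTop (nhdsWithin (a, a) (Set.Ici a ×ˢ Set.Ici a)) := by
      apply tendsto_nhdsWithin_of_tendsto_nhds_of_eventually_within
      · exact h1.prodMk_nhds h2
      · exact Filter.Eventually.of_forall fun n => ⟨hdmap _ _, hdmap _ _⟩
    have hΔtend : Tendsto
        (fun n => Δ 2 ![d x (u (N + n + 1)), d (u (N + n + 1)) (T x)])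
        atTop (nhds a) := hΔ₂t.comp hpair
    have hle : d x (T x) ≤ a := ge_of_tendsto hΔtend (Filter.Eventually.of_forall hb)
    have heq : d x (T x) = a := le_antisymm hle (hdmap _ _)
    exact ((hself x (T x)).mp heq).symm
  refine ⟨x, hfix, fun y hy => ?_⟩
  by_contra hne
  have hlt : a < d y x := lt_of_le_of_ne (hdmap y x) fun h => hne ((hself y x).mp h.symm)
  have h1 : d y x ≤ ψ (d y x) := by
    have h := hcontr y x
    rwa [hy, hfix] at h
  have h2 : ψ (d y x) < d y x := hψlt _ hlt
  linarith
end

section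
/- Let (X,d) be a metric space and s ∈ [0,1) such that d(x,z) ≤ s(d(x,y) + d(y,z)) for all pairwise distinct x,y,z ∈ X (the s-constrained triangle inequality). Then there is no injective sequence (x_n) of points in X such that the series ∑_{i=1}^∞ d(x_i, x_{i+1}) converges. -/
/-!
Along a Cauchy sequence `u`, the distances `d(u k, u n)` converge to some `a`, while the steps
`d(u n, u (n+1))` tend to `0`. For `n > k` the three points `u k, u (n+1), u n` are distinct, so
`d(u k, u n) ≤ s (d(u k, u (n+1)) + d(u (n+1), u n))`; in the limit `a ≤ s a`, hence `a = 0`.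
Thus `u` converges to each of its terms, which is impossible for an injective sequence.
-/

open Filter Topology

theorem CauchySeq.tendsto_dist_succ_zero {X : Type*} [PseudoMetricSpace X] {u : ℕ → X}
    (hu : CauchySeq u) : Tendsto (fun n => dist (u n) (u (n + 1))) atTop (𝓝 0) := by
  have hpair : Tendsto (fun n : ℕ => (n, n + 1)) atTop atTop := by
    rw [← prod_atTop_atTop_eq]
    exact tendsto_id.prodMk (tendsto_add_atTop_nat 1)
  exact (cauchySeq_iff_tendsto_dist_atTop_0.1 hu).comp hpair

theorem CauchySeq.exists_tendsto_dist_left {X : Type*} [PseudoMetricSpace X] {u : ℕ → X}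
    (hu : CauchySeq u) (x : X) : ∃ a, Tendsto (fun n => dist x (u n)) atTop (𝓝 a) :=
  cauchySeq_tendsto_of_complete
    ((uniformContinuous_const.dist uniformContinuous_id).comp_cauchySeq hu)

theorem tendsto_of_injective_cauchySeq_of_constrained_triangle {X : Type*} [MetricSpace X]
    {s : ℝ} (hs1 : s < 1)
    (hcon : ∀ x y z : X, x ≠ y → y ≠ z → x ≠ z → dist x z ≤ s * (dist x y + dist y z))
    {u : ℕ → X} (hinj : Function.Injective u) (hu : CauchySeq u) (k : ℕ) :
    Tendsto u atTop (𝓝 (u k)) := by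
  obtain ⟨a, ha⟩ := hu.exists_tendsto_dist_left (u k)
  have hstep : ∀ᶠ n in atTop,
      dist (u k) (u n) ≤ s * (dist (u k) (u (n + 1)) + dist (u (n + 1)) (u n)) := by
    filter_upwards [eventually_gt_atTop k] with n hn
    exact hcon _ _ _ (hinj.ne (by omega)) (hinj.ne (by omega)) (hinj.ne hn.ne)
  have hlim : Tendsto (fun n => s * (dist (u k) (u (n + 1)) + dist (u (n + 1)) (u n))) atTop
      (𝓝 (s * (a + 0))) := by
    refine ((ha.comp (tendsto_add_atTop_nat 1)).add ?_).const_mul s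
    simpa only [dist_comm] using hu.tendsto_dist_succ_zero
  have ha_le : a ≤ s * (a + 0) := le_of_tendsto_of_tendsto ha hlim hstep
  have ha_nonneg : 0 ≤ a := ge_of_tendsto' ha fun _ => dist_nonneg
  have ha0 : a = 0 := by nlinarith
  rw [tendsto_iff_dist_tendsto_zero]
  simpa only [dist_comm, ha0] using ha

theorem stmt_19_general {X : Type*} [MetricSpace X] (s : ℝ) (hs1 : s < 1)
    (hcon : ∀ x y z : X, x ≠ y → y ≠ z → x ≠ z →
      dist x z ≤ s * (dist x y + dist y z)) :
    ¬ ∃ u : ℕ → X, Function.Injective u ∧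
      Summable (fun i => dist (u i) (u (i + 1))) := by
  rintro ⟨u, hinj, hsum⟩
  have hu : CauchySeq u := cauchySeq_of_summable_dist hsum
  exact hinj.ne zero_ne_one <| tendsto_nhds_unique
    (tendsto_of_injective_cauchySeq_of_constrained_triangle hs1 hcon hinj hu 0)
    (tendsto_of_injective_cauchySeq_of_constrained_triangle hs1 hcon hinj hu 1)

theorem stmt_19 {X : Type*} [MetricSpace X] (s : ℝ) (hs0 : 0 ≤ s) (hs1 : s < 1)
    (hcon : ∀ x y z : X, x ≠ y → y ≠ z → x ≠ z →
      dist x z ≤ s * (dist x y + dist y z)) :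
    ¬ ∃ u : ℕ → X, Function.Injective u ∧
      Summable (fun i => dist (u i) (u (i + 1))) :=
  stmt_19_general s hs1 hcon
end
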